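/- arXiv:2602.09143 — 6 statements merged into one kernel-verified Lean document; each statement's English description precedes it below -/
import Mathlib

section
/- Every separable linearly ordered compact topological space is hereditarily Lindelöf. -/
/-!
Every open set `W` is σ-compact. Its order-connected components are open, so each meets a
fixed countable dense set `S`, and there are only countably many of them. A component `C` is
covered by the compact intervals `[d, e]` with `d, e ∈ S ∩ C`, together with its least and
greatest elements: a point of `C` that is not the least one has points of `C` below it, hence
(by density) points of `S ∩ C` below it, and symmetrically above.
-/

open Set TopologicalSpace

lemma IsSigmaCompact.union {X : Type*} [TopologicalSpace X] {s t : Set X}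
    (hs : IsSigmaCompact s) (ht : IsSigmaCompact t) : IsSigmaCompact (s ∪ t) := by
  rw [union_eq_iUnion]
  exact isSigmaCompact_iUnion _ (Bool.forall_bool.2 ⟨ht, hs⟩)

section OrderTopology

variable {X : Type*} [LinearOrder X] [TopologicalSpace X] [OrderTopology X]

lemma IsOpen.ordConnectedComponent {W : Set X} (hW : IsOpen W) (x : X) :
    IsOpen (ordConnectedComponent W x) := by
  rw [isOpen_iff_mem_nhds]
  intro y hy
  rw [ordConnectedComponent_eq hy]
  exact ordConnectedComponent_mem_nhds.2 (hW.mem_nhds (hy right_mem_uIcc))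

lemma Dense.biUnion_ordConnectedComponent {S W : Set X} (hS : Dense S) (hW : IsOpen W) :
    ⋃ s ∈ S ∩ W, ordConnectedComponent W s = W := by
  refine (iUnion₂_subset fun s _ => ordConnectedComponent_subset).antisymm fun x hx => ?_
  obtain ⟨s, hsS, hsx⟩ := hS.exists_mem_open (hW.ordConnectedComponent x)
    (nonempty_ordConnectedComponent.2 hx)
  exact mem_biUnion ⟨hsS, ordConnectedComponent_subset hsx⟩
    (mem_ordConnectedComponent_comm.1 hsx)

lemma Dense.subset_biUnion_Icc_union_isLeast_union_isGreatest {S C : Set X} (hS : Dense S)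
    (hC : IsOpen C) :
    C ⊆ (⋃ p ∈ (S ∩ C) ×ˢ (S ∩ C), Icc p.1 p.2) ∪
      ({x | IsLeast C x} ∪ {x | IsGreatest C x}) := by
  intro x hx
  by_cases hleast : IsLeast C x
  · exact Or.inr (Or.inl hleast)
  by_cases hgreatest : IsGreatest C x
  · exact Or.inr (Or.inr hgreatest)
  obtain ⟨y, hyC, hyx⟩ : ∃ y ∈ C, y < x := by
    simpa [IsLeast, lowerBounds, hx] using hleast
  obtain ⟨z, hzC, hxz⟩ : ∃ z ∈ C, x < z := by
    simpa [IsGreatest, upperBounds, hx] using hgreatest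
  obtain ⟨d, hdS, hdC, hdx⟩ := hS.exists_mem_open (hC.inter isOpen_Iio) ⟨y, hyC, hyx⟩
  obtain ⟨e, heS, heC, hxe⟩ := hS.exists_mem_open (hC.inter isOpen_Ioi) ⟨z, hzC, hxz⟩
  exact Or.inl <|
    mem_biUnion (x := (d, e)) ⟨⟨hdS, hdC⟩, heS, heC⟩ ⟨le_of_lt hdx, le_of_lt hxe⟩

variable [CompactIccSpace X] [SeparableSpace X]

lemma IsOpen.isSigmaCompact_of_ordConnected {C : Set X} (hC : IsOpen C) (hCc : C.OrdConnected) :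
    IsSigmaCompact C := by
  obtain ⟨S, hSc, hSd⟩ := exists_countable_dense X
  have hcover := hSd.subset_biUnion_Icc_union_isLeast_union_isGreatest hC
  rw [hcover.antisymm (union_subset (iUnion₂_subset fun p hp => hCc.out hp.1.2 hp.2.2)
    (union_subset (fun _ hx => hx.1) (fun _ hx => hx.1)))]
  have hSC : (S ∩ C).Countable := hSc.mono inter_subset_left
  refine (isSigmaCompact_biUnion (hSC.prod hSC) fun p _ => isCompact_Icc.isSigmaCompact).union ?_
  have hleast : {x | IsLeast C x}.Subsingleton := fun _ ha _ hb => ha.unique hb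
  have hgreatest : {x | IsGreatest C x}.Subsingleton := fun _ ha _ hb => ha.unique hb
  exact (hleast.isCompact.union hgreatest.isCompact).isSigmaCompact

lemma IsOpen.isSigmaCompact_of_separableSpace {W : Set X} (hW : IsOpen W) : IsSigmaCompact W := by
  obtain ⟨S, hSc, hSd⟩ := exists_countable_dense X
  rw [← hSd.biUnion_ordConnectedComponent hW]
  exact isSigmaCompact_biUnion (hSc.mono inter_subset_left) fun s _ =>
    (hW.ordConnectedComponent s).isSigmaCompact_of_ordConnected inferInstance

theorem HereditarilyLindelofSpace.of_separableSpace_of_compactIccSpace :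
    HereditarilyLindelofSpace X :=
  .of_forall_isOpen fun _ hW => hW.isSigmaCompact_of_separableSpace.isLindelof

end OrderTopology

theorem separable_compact_line_hereditarilyLindelof
    (X : Type*) [LinearOrder X] [TopologicalSpace X] [OrderTopology X]
    [CompactSpace X] [TopologicalSpace.SeparableSpace X] :
    HereditarilyLindelofSpace X :=
  have : CompactIccSpace X := ⟨fun {_ _} => isClosed_Icc.isCompact⟩
  .of_separableSpace_of_compactIccSpace
end

section
/- Every separable linearly ordered compact topological space is hereditarily separable. -/
/-!
Fix a countable dense `D` and let `E ⊆ s` consist of `s ∩ D`, one point of `s` in every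
interval `(c, d)` with `c, d ∈ D` that meets `s`, and the greatest element of `s ∩ (-∞, d)` and
least element of `s ∩ (d, ∞)` for `d ∈ D`, whenever these exist. A point `y ∈ s \ D` is not
isolated, so by density of `D` each of its neighbourhoods contains some `[y, d)` or `(d, y]`
with `d ∈ D`, and each such interval meets `E`.
-/

open Set Topology TopologicalSpace

section

variable {X : Type*} [LinearOrder X]

lemma exists_gt_of_forall_not_isGreatest {t : Set X} (h : ∀ m, ¬IsGreatest t m) {y : X}
    (hy : y ∈ t) : ∃ z ∈ t, y < z := by
  by_contra! H
  exact h y ⟨hy, H⟩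

variable [TopologicalSpace X] [OrderTopology X] {D : Set X}

lemma Dense.exists_Ico_subset_or_exists_isOpen_subset_Iic (hD : Dense D) {y : X} {U : Set X}
    (hU : U ∈ 𝓝 y) :
    (∃ d ∈ D, y < d ∧ Ico y d ⊆ U) ∨ ∃ V, IsOpen V ∧ y ∈ V ∧ V ⊆ Iic y := by
  by_cases h : ∃ u, y < u
  · obtain ⟨u, hyu, hIcoU⟩ := exists_Ico_subset_of_mem_nhds hU h
    by_cases hDu : (Ioo y u ∩ D).Nonempty
    · obtain ⟨d, hd, hdD⟩ := hDu
      exact Or.inl ⟨d, hdD, hd.1, (Ico_subset_Ico_right hd.2.le).trans hIcoU⟩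
    · refine Or.inr ⟨Iio u, isOpen_Iio, hyu, fun x hx => not_lt.1 fun hyx => ?_⟩
      exact hDu (hD.inter_open_nonempty _ isOpen_Ioo ⟨x, hyx, hx⟩)
  · simp only [not_exists, not_lt] at h
    exact Or.inr ⟨univ, isOpen_univ, mem_univ y, fun x _ => h x⟩

lemma Dense.exists_Ioc_subset_or_exists_isOpen_subset_Ici (hD : Dense D) {y : X} {U : Set X}
    (hU : U ∈ 𝓝 y) :
    (∃ d ∈ D, d < y ∧ Ioc d y ⊆ U) ∨ ∃ V, IsOpen V ∧ y ∈ V ∧ V ⊆ Ici y := by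
  rcases Dense.exists_Ico_subset_or_exists_isOpen_subset_Iic (X := Xᵒᵈ) hD hU with
    ⟨d, hd, hdy, hsub⟩ | h
  · exact Or.inl ⟨d, hd, hdy, fun x hx => hsub ⟨hx.2, hx.1⟩⟩
  · exact Or.inr h

lemma Dense.exists_Ico_or_Ioc_subset_of_notMem (hD : Dense D) {y : X} (hy : y ∉ D) {U : Set X}
    (hU : U ∈ 𝓝 y) : (∃ d ∈ D, y < d ∧ Ico y d ⊆ U) ∨ ∃ d ∈ D, d < y ∧ Ioc d y ⊆ U := by
  rcases hD.exists_Ico_subset_or_exists_isOpen_subset_Iic hU with h | ⟨V, hVo, hyV, hV⟩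
  · exact Or.inl h
  rcases hD.exists_Ioc_subset_or_exists_isOpen_subset_Ici hU with h | ⟨W, hWo, hyW, hW⟩
  · exact Or.inr h
  obtain ⟨z, ⟨hzV, hzW⟩, hzD⟩ := hD.inter_open_nonempty _ (hVo.inter hWo) ⟨y, hyV, hyW⟩
  exact absurd (le_antisymm (hV hzV) (hW hzW) ▸ hzD) hy

variable {s E : Set X}

lemma exists_mem_Ico_of_forall_isGreatest_mem (hD : Dense D)
    (hE : ∀ c ∈ D, ∀ d ∈ D, (s ∩ Ioo c d).Nonempty → (E ∩ Ioo c d).Nonempty)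
    (hmax : ∀ d ∈ D, ∀ m, IsGreatest (s ∩ Iio d) m → m ∈ E)
    {y d : X} (hy : y ∈ s) (hd : d ∈ D) (hyd : y < d) : (E ∩ Ico y d).Nonempty := by
  by_cases h : ∃ m, IsGreatest (s ∩ Iio d) m
  · obtain ⟨m, hm⟩ := h
    exact ⟨m, hmax d hd m hm, hm.2 ⟨hy, hyd⟩, hm.1.2⟩
  simp only [not_exists] at h
  -- Without a greatest element, some `c ∈ D` lies strictly between `y` and a point of `s`
  -- below `d`, so `E` meets `Ioo c d`.
  obtain ⟨y', hy', hyy'⟩ := exists_gt_of_forall_not_isGreatest h ⟨hy, hyd⟩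
  obtain ⟨y'', hy'', hy'y''⟩ := exists_gt_of_forall_not_isGreatest h hy'
  obtain ⟨c, hc, hcD⟩ := hD.inter_open_nonempty _ isOpen_Ioo ⟨y', hyy', hy'y''⟩
  obtain ⟨e, heE, he⟩ := hE c hcD d hd ⟨y'', hy''.1, hc.2, hy''.2⟩
  exact ⟨e, heE, (hc.1.trans he.1).le, he.2⟩

lemma exists_mem_Ioc_of_forall_isLeast_mem (hD : Dense D)
    (hE : ∀ c ∈ D, ∀ d ∈ D, (s ∩ Ioo c d).Nonempty → (E ∩ Ioo c d).Nonempty)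
    (hmin : ∀ d ∈ D, ∀ m, IsLeast (s ∩ Ioi d) m → m ∈ E)
    {y d : X} (hy : y ∈ s) (hd : d ∈ D) (hdy : d < y) : (E ∩ Ioc d y).Nonempty := by
  have hE' : ∀ c ∈ D, ∀ d ∈ D, (s ∩ Ioo (α := Xᵒᵈ) c d).Nonempty →
      (E ∩ Ioo (α := Xᵒᵈ) c d).Nonempty := by
    rintro c hc d hd ⟨x, hxs, hdx, hxc⟩
    obtain ⟨e, heE, hde, hec⟩ := hE d hd c hc ⟨x, hxs, hxc, hdx⟩
    exact ⟨e, heE, hec, hde⟩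
  obtain ⟨e, heE, hye, hed⟩ :=
    exists_mem_Ico_of_forall_isGreatest_mem (X := Xᵒᵈ) hD hE' hmin hy hd hdy
  exact ⟨e, heE, hed, hye⟩

lemma subset_closure_of_forall_isGreatest_isLeast_mem (hD : Dense D) (hsD : s ∩ D ⊆ E)
    (hE : ∀ c ∈ D, ∀ d ∈ D, (s ∩ Ioo c d).Nonempty → (E ∩ Ioo c d).Nonempty)
    (hmax : ∀ d ∈ D, ∀ m, IsGreatest (s ∩ Iio d) m → m ∈ E)
    (hmin : ∀ d ∈ D, ∀ m, IsLeast (s ∩ Ioi d) m → m ∈ E) : s ⊆ closure E := by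
  intro y hy
  by_cases hyD : y ∈ D
  · exact subset_closure (hsD ⟨hy, hyD⟩)
  refine mem_closure_iff_nhds.2 fun U hU => ?_
  rcases hD.exists_Ico_or_Ioc_subset_of_notMem hyD hU with
    ⟨d, hd, hyd, hsub⟩ | ⟨d, hd, hdy, hsub⟩
  · obtain ⟨e, heE, he⟩ := exists_mem_Ico_of_forall_isGreatest_mem hD hE hmax hy hd hyd
    exact ⟨e, hsub he, heE⟩
  · obtain ⟨e, heE, he⟩ := exists_mem_Ioc_of_forall_isLeast_mem hD hE hmin hy hd hdy
    exact ⟨e, hsub he, heE⟩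

theorem Dense.exists_countable_subset_subset_closure (hD : Dense D) (hDc : D.Countable)
    (s : Set X) : ∃ E ⊆ s, E.Countable ∧ s ⊆ closure E := by
  set P : Set (X × X) := {p | p ∈ D ×ˢ D ∧ (s ∩ Ioo p.1 p.2).Nonempty}
  have : Countable P := ((hDc.prod hDc).mono fun _ hp => hp.1).to_subtype
  choose f hf using fun p : P => p.2.2
  refine ⟨(s ∩ D ∪ range f) ∪ ((⋃ d ∈ D, {m | IsGreatest (s ∩ Iio d) m}) ∪
      ⋃ d ∈ D, {m | IsLeast (s ∩ Ioi d) m}), ?_, ?_, ?_⟩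
  · refine union_subset (union_subset inter_subset_left (range_subset_iff.2 fun p => (hf p).1))
      (union_subset ?_ ?_) <;> exact iUnion₂_subset fun _ _ _ hm => hm.1.1
  · refine ((hDc.mono inter_subset_right).union (countable_range f)).union
      ((hDc.biUnion fun _ _ => ?_).union (hDc.biUnion fun _ _ => ?_)) <;>
    exact Subsingleton.countable fun _ ha _ hb => ha.unique hb
  · refine subset_closure_of_forall_isGreatest_isLeast_mem hD
      (subset_union_left.trans subset_union_left) (fun c hc d hd h => ?_)
      (fun d hd m hm => ?_) (fun d hd m hm => ?_)
    · let p : P := ⟨(c, d), ⟨hc, hd⟩, h⟩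
      exact ⟨f p, Or.inl (Or.inr (mem_range_self p)), (hf p).2⟩
    · exact Or.inr (Or.inl (mem_biUnion hd hm))
    · exact Or.inr (Or.inr (mem_biUnion hd hm))

end

lemma TopologicalSpace.SeparableSpace.of_subset_closure {X : Type*} [TopologicalSpace X]
    {s E : Set X} (hEs : E ⊆ s) (hEc : E.Countable) (hsE : s ⊆ closure E) :
    SeparableSpace s := by
  refine ⟨⟨(↑) ⁻¹' E, hEc.preimage Subtype.val_injective, Subtype.dense_iff.2 ?_⟩⟩
  rwa [Subtype.image_preimage_coe, inter_eq_right.2 hEs]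

theorem separable_compact_line_hereditarilySeparable_general
    (X : Type*) [LinearOrder X] [TopologicalSpace X] [OrderTopology X]
    [TopologicalSpace.SeparableSpace X] :
    ∀ s : Set X, TopologicalSpace.SeparableSpace s := by
  intro s
  obtain ⟨D, hDc, hD⟩ := exists_countable_dense X
  obtain ⟨E, hEs, hEc, hsE⟩ := hD.exists_countable_subset_subset_closure hDc s
  exact .of_subset_closure hEs hEc hsE

theorem separable_compact_line_hereditarilySeparable
    (X : Type*) [LinearOrder X] [TopologicalSpace X] [OrderTopology X]
    [CompactSpace X] [TopologicalSpace.SeparableSpace X] :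
    ∀ s : Set X, TopologicalSpace.SeparableSpace s :=
  separable_compact_line_hereditarilySeparable_general X
end

section
/- Let K ⊆ [0,1] be a closed set and A ⊆ K. Equip the set K_A = (K × {0}) ∪ (A × {1}) with the order topology induced by the lexicographic order on [0,1] × {0,1}. Then K_A is a compact Hausdorff separable topological space. -/
/-!
Every set `S ⊆ K_A` has a least upper bound: if `s` is the supremum of the first coordinates of
`S` (a point of `K`, as `K` is compact), it is `(s, 1)` when that point lies in `S` and `(s, 0)`
otherwise. A linear order in which every set has a least upper bound is compact in its order
topology.

For separability, let `C` consist of a countable dense subset `C₀` of `K` and of the countably many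
points of `K` that are isolated from one side within `K`. The points of `K_A` with first coordinate
in `C` are dense: if `x ∉ C`, then `(x, 0)` is the supremum of the points `(c, 0)` with `c ∈ C₀`,
`c < x`, and dually `(x, 1)` is the infimum of those with `c > x`.
-/

open Set

/-- The separable compact line `K_A = (K × {0}) ∪ (A × {1})`, realized as a subtype of
`ℝ ×ₗ Bool` (with `false` playing the role of `0` and `true` the role of `1`),
ordered lexicographically. -/
abbrev KA (K A : Set ℝ) : Type :=
  {p : ℝ ×ₗ Bool // (ofLex p).1 ∈ K ∧ ((ofLex p).2 = true → (ofLex p).1 ∈ A)}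

/-- `K_A` carries the order topology of (the restriction of) the lexicographic order. -/
noncomputable instance (K A : Set ℝ) : TopologicalSpace (KA K A) := Preorder.topology (KA K A)

instance (K A : Set ℝ) : OrderTopology (KA K A) := ⟨rfl⟩

open Filter Topology TopologicalSpace

theorem compactSpace_of_forall_exists_isLUB {α : Type*} [LinearOrder α] [TopologicalSpace α]
    [OrderTopology α] (h : ∀ s : Set α, ∃ a, IsLUB s a) : CompactSpace α := by
  choose lub hlub using h
  let _ : SupSet α := ⟨lub⟩
  -- `Lattice α` comes first so that `⊔` and `⊓` remain the `max` and `min` of the linear order.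
  let _ : CompleteLattice α := { (inferInstance : Lattice α), completeLatticeOfSup α hlub with }
  let _ : CompleteLinearOrder α :=
    { ‹LinearOrder α›, ‹CompleteLattice α›, LinearOrder.toBiheytingAlgebra α with }
  have : OrderTopology α := ⟨OrderTopology.topology_eq_generate_intervals⟩
  infer_instance

theorem nonempty_inter_Ioo_of_nhdsWithin_Ioi_neBot {α : Type*} [TopologicalSpace α]
    [LinearOrder α] [OrderClosedTopology α] {s t : Set α} (hst : s ⊆ closure t) {x b : α}
    (hx : (𝓝[s ∩ Ioi x] x).NeBot) (hxb : x < b) : (t ∩ Ioo x b).Nonempty := by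
  obtain ⟨y, ⟨hys, hxy⟩, hyb⟩ := hx.nonempty_of_mem (inter_mem_nhdsWithin _ (Iio_mem_nhds hxb))
  exact inter_comm t _ ▸ mem_closure_iff.1 (hst hys) _ isOpen_Ioo ⟨hxy, hyb⟩

theorem nonempty_inter_Ioo_of_nhdsWithin_Iio_neBot {α : Type*} [TopologicalSpace α]
    [LinearOrder α] [OrderClosedTopology α] {s t : Set α} (hst : s ⊆ closure t) {a x : α}
    (hx : (𝓝[s ∩ Iio x] x).NeBot) (hax : a < x) : (t ∩ Ioo a x).Nonempty := by
  obtain ⟨y, ⟨hys, hyx⟩, hay⟩ := hx.nonempty_of_mem (inter_mem_nhdsWithin _ (Ioi_mem_nhds hax))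
  exact inter_comm t _ ▸ mem_closure_iff.1 (hst hys) _ isOpen_Ioo ⟨hay, hyx⟩

namespace KA

variable {K A : Set ℝ}

def fst (p : KA K A) : ℝ := (ofLex p.1).1

def snd (p : KA K A) : Bool := (ofLex p.1).2

theorem fst_mem (p : KA K A) : fst p ∈ K := p.2.1

def lo (x : ℝ) (hx : x ∈ K) : KA K A := ⟨toLex (x, false), hx, Bool.noConfusion⟩

theorem le_iff {p q : KA K A} : p ≤ q ↔ fst p < fst q ∨ fst p = fst q ∧ snd p ≤ snd q :=
  Prod.Lex.le_iff

theorem lt_iff {p q : KA K A} : p < q ↔ fst p < fst q ∨ fst p = fst q ∧ snd p < snd q :=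
  Prod.Lex.lt_iff

theorem fst_mono : Monotone (fst : KA K A → ℝ) := fun _ _ h =>
  (le_iff.1 h).elim le_of_lt fun h => h.1.le

theorem lt_of_fst_lt {p q : KA K A} (h : fst p < fst q) : p < q := lt_iff.2 (.inl h)

theorem le_iff_fst_le_of_snd_eq_false {p q : KA K A} (hp : snd p = false) :
    p ≤ q ↔ fst p ≤ fst q := by
  simp [le_iff, hp, le_iff_lt_or_eq (a := fst p)]

theorem le_iff_fst_le_of_snd_eq_true {p q : KA K A} (hq : snd q = true) :
    p ≤ q ↔ fst p ≤ fst q := by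
  simp [le_iff, hq, le_iff_lt_or_eq (a := fst p)]

theorem lt_iff_fst_lt_of_snd_eq_false {p q : KA K A} (hq : snd q = false) :
    p < q ↔ fst p < fst q := by
  simpa using (le_iff_fst_le_of_snd_eq_false (q := p) hq).not

theorem lt_iff_fst_lt_of_snd_eq_true {p q : KA K A} (hp : snd p = true) :
    p < q ↔ fst p < fst q := by
  simpa using (le_iff_fst_le_of_snd_eq_true (p := q) hp).not

theorem isBot_lo_sInf (hK : IsCompact K) (hne : K.Nonempty) :
    IsBot (lo (sInf K) (hK.sInf_mem hne) : KA K A) := fun p =>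
  (le_iff_fst_le_of_snd_eq_false rfl).2 (csInf_le hK.bddBelow (fst_mem p))

theorem exists_isLUB_of_nonempty (hK : IsCompact K) {S : Set (KA K A)} (hS : S.Nonempty) :
    ∃ a, IsLUB S a := by
  set s := sSup (fst '' S)
  have hSK : fst '' S ⊆ K := image_subset_iff.2 fun p _ => fst_mem p
  have hs : IsLUB (fst '' S) s := isLUB_csSup (hS.image fst) (hK.bddAbove.mono hSK)
  have hsK : s ∈ K := hK.isClosed.closure_subset_iff.2 hSK (hs.mem_closure (hS.image fst))
  by_cases htop : ∃ p ∈ S, fst p = s ∧ snd p = true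
  · obtain ⟨p, hpS, hps, hp⟩ := htop
    refine ⟨p, IsGreatest.isLUB ⟨hpS, fun q hq => ?_⟩⟩
    exact (le_iff_fst_le_of_snd_eq_true hp).2 (hps ▸ hs.1 (mem_image_of_mem _ hq))
  · push Not at htop
    refine ⟨lo s hsK, fun q hq => ?_, fun z hz => ?_⟩
    · have hqs : fst q ≤ s := hs.1 (mem_image_of_mem _ hq)
      cases hq' : snd q
      · exact (le_iff_fst_le_of_snd_eq_false hq').2 hqs
      · exact (lt_of_fst_lt (hqs.lt_of_ne fun h => htop q hq h hq')).le
    · exact (le_iff_fst_le_of_snd_eq_false rfl).2 (hs.2 (fst_mono.mem_upperBounds_image hz))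

theorem compactSpace (hK : IsCompact K) : CompactSpace (KA K A) := by
  rcases isEmpty_or_nonempty (KA K A) with _ | ⟨⟨p⟩⟩
  · infer_instance
  refine compactSpace_of_forall_exists_isLUB fun S =>
    S.eq_empty_or_nonempty.elim ?_ (exists_isLUB_of_nonempty hK)
  rintro rfl
  exact ⟨_, isLUB_empty_iff.2 (isBot_lo_sInf hK ⟨fst p, fst_mem p⟩)⟩

theorem countable_setOf_fst_mem {C : Set ℝ} (hC : C.Countable) :
    {p : KA K A | fst p ∈ C}.Countable := by
  have hinj : Function.Injective fun p : KA K A => ofLex p.1 :=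
    fun _ _ h => Subtype.ext (ofLex.injective h)
  exact ((hC.prod (countable_univ (α := Bool))).preimage hinj).mono fun _ hp =>
    mk_mem_prod hp (mem_univ _)

theorem mem_closure_of_snd_eq_false {C : Set ℝ} (hCK : C ⊆ K) (hKC : K ⊆ closure C)
    {p : KA K A} (hp : snd p = false)
    (hacc : (𝓝[K ∩ Iio (fst p)] fst p).NeBot) : p ∈ closure {q | fst q ∈ C} := by
  have key : ∀ a < fst p, ∃ q ∈ {q | fst q ∈ C} ∩ Iio p, a < fst q := fun a ha => by
    obtain ⟨c, hcC, hac, hcp⟩ := nonempty_inter_Ioo_of_nhdsWithin_Iio_neBot hKC hacc ha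
    exact ⟨lo c (hCK hcC), ⟨hcC, (lt_iff_fst_lt_of_snd_eq_false hp).2 hcp⟩, hac⟩
  have hlub : IsLUB ({q | fst q ∈ C} ∩ Iio p) p := by
    refine ⟨fun q hq => hq.2.le, fun z hz => not_lt.1 fun hzp => ?_⟩
    obtain ⟨q, hq, hzq⟩ := key (fst z) ((lt_iff_fst_lt_of_snd_eq_false hp).1 hzp)
    exact (hz hq).not_gt (lt_of_fst_lt hzq)
  obtain ⟨q, hq, -⟩ := key (fst p - 1) (by linarith)
  exact closure_mono inter_subset_left (hlub.mem_closure ⟨q, hq⟩)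

theorem mem_closure_of_snd_eq_true {C : Set ℝ} (hCK : C ⊆ K) (hKC : K ⊆ closure C)
    {p : KA K A} (hp : snd p = true)
    (hacc : (𝓝[K ∩ Ioi (fst p)] fst p).NeBot) : p ∈ closure {q | fst q ∈ C} := by
  have key : ∀ b > fst p, ∃ q ∈ {q | fst q ∈ C} ∩ Ioi p, fst q < b := fun b hb => by
    obtain ⟨c, hcC, hpc, hcb⟩ := nonempty_inter_Ioo_of_nhdsWithin_Ioi_neBot hKC hacc hb
    exact ⟨lo c (hCK hcC), ⟨hcC, (lt_iff_fst_lt_of_snd_eq_true hp).2 hpc⟩, hcb⟩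
  have hglb : IsGLB ({q | fst q ∈ C} ∩ Ioi p) p := by
    refine ⟨fun q hq => hq.2.le, fun z hz => not_lt.1 fun hpz => ?_⟩
    obtain ⟨q, hq, hqz⟩ := key (fst z) ((lt_iff_fst_lt_of_snd_eq_true hp).1 hpz)
    exact (hz hq).not_gt (lt_of_fst_lt hqz)
  obtain ⟨q, hq, -⟩ := key (fst p + 1) (by linarith)
  exact closure_mono inter_subset_left (hglb.mem_closure ⟨q, hq⟩)

theorem separableSpace : SeparableSpace (KA K A) := by
  obtain ⟨C₀, hC₀K, hC₀, hKC₀⟩ := (IsSeparable.of_separableSpace K).exists_countable_dense_subset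
  set C := C₀ ∪ {x ∈ K | 𝓝[K ∩ Iio x] x = ⊥} ∪ {x ∈ K | 𝓝[K ∩ Ioi x] x = ⊥}
  have hC : C.Countable :=
    (hC₀.union countable_setOfPred_isolated_left_within).union
      countable_setOfPred_isolated_right_within
  refine ⟨⟨_, countable_setOf_fst_mem hC, fun p => ?_⟩⟩
  by_cases hpC : fst p ∈ C
  · exact subset_closure hpC
  have hC₀C : closure {q : KA K A | fst q ∈ C₀} ⊆ closure {q | fst q ∈ C} :=
    closure_mono fun q hq => .inl (.inl hq)
  cases hp : snd p
  · exact hC₀C <| mem_closure_of_snd_eq_false hC₀K hKC₀ hp <|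
      neBot_iff.2 fun h => hpC (.inl (.inr ⟨fst_mem p, h⟩))
  · exact hC₀C <| mem_closure_of_snd_eq_true hC₀K hKC₀ hp <|
      neBot_iff.2 fun h => hpC (.inr ⟨fst_mem p, h⟩)

end KA

theorem KA_compact_t2_separable_general (K A : Set ℝ)
    (hKsub : K ⊆ Set.Icc 0 1) (hKcl : IsClosed K) :
    CompactSpace (KA K A) ∧ T2Space (KA K A) ∧ TopologicalSpace.SeparableSpace (KA K A) :=
  ⟨KA.compactSpace (isCompact_Icc.of_isClosed_subset hKcl hKsub), inferInstance,
    KA.separableSpace⟩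

theorem KA_compact_t2_separable (K A : Set ℝ)
    (hKsub : K ⊆ Set.Icc 0 1) (hKcl : IsClosed K) (hAK : A ⊆ K) :
    CompactSpace (KA K A) ∧ T2Space (KA K A) ∧ TopologicalSpace.SeparableSpace (KA K A) :=
  KA_compact_t2_separable_general K A hKsub hKcl
end

section
/- If A ⊆ (0,1) is dense in [0,1], then the space I_A = ([0,1] × {0}) ∪ (A × {1}), with the order topology from the lexicographic order, is totally disconnected (zero-dimensional). -/
open Set

/-!
Every point `a ∈ A` splits into the jump `(a, 0) ⋖ (a, 1)`, and at a jump the half-line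
`Iic (a, 0) = Iio (a, 1)` is clopen. Since `A` is dense, a jump lies between any two points of
`I_A`, so any two points are separated by a clopen set.
-/

section CovBy

variable {α : Type*} [LinearOrder α] [TopologicalSpace α] [OrderTopology α]

theorem CovBy.isClopen_Iic {a b : α} (h : a ⋖ b) : IsClopen (Iic a) :=
  ⟨isClosed_Iic, h.Iio_eq ▸ isOpen_Iio⟩

theorem totallySeparatedSpace_of_exists_covBy_between
    (h : ∀ x y : α, x < y → ∃ a b, x ≤ a ∧ a ⋖ b ∧ b ≤ y) : TotallySeparatedSpace α := by
  rw [totallySeparatedSpace_iff_exists_isClopen]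
  intro x y hxy
  wlog hlt : x < y generalizing x y
  · obtain ⟨U, hU, hyU, hxU⟩ := this hxy.symm (hxy.lt_or_gt.resolve_left hlt)
    exact ⟨Uᶜ, hU.compl, hxU, fun hx => hx hyU⟩
  obtain ⟨a, b, hxa, hab, hby⟩ := h x y hlt
  exact ⟨Iic a, hab.isClopen_Iic, hxa, fun hya => (hab.lt.trans_le hby).not_ge hya⟩

end CovBy

namespace KA

variable {K A : Set ℝ}

theorem covBy_of_mem {a : ℝ} (haK : a ∈ K) (haA : a ∈ A) :
    (⟨toLex (a, false), haK, by simp⟩ : KA K A) ⋖ ⟨toLex (a, true), haK, fun _ => haA⟩ :=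
  CovBy.of_image (OrderEmbedding.subtype _)
    (Prod.Lex.toLex_covBy_toLex_iff.2 (Or.inl ⟨rfl, by decide⟩))

theorem exists_covBy_between (hK : K.OrdConnected) (hdense : K ⊆ closure A)
    {x y : KA K A} (hxy : x < y) : ∃ a b, x ≤ a ∧ a ⋖ b ∧ b ≤ y := by
  obtain ⟨⟨s, i⟩, hsK, hsA⟩ := x
  obtain ⟨⟨t, j⟩, htK, htA⟩ := y
  change toLex (s, i) < toLex (t, j) at hxy
  rcases Prod.Lex.toLex_lt_toLex.1 hxy with hst | ⟨rfl, hij⟩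
  · have hmid : (s + t) / 2 ∈ Ioo s t := ⟨by linarith, by linarith⟩
    obtain ⟨a, ha, haA⟩ := _root_.mem_closure_iff.1
      (hdense (hK.out hsK htK (Ioo_subset_Icc_self hmid))) _ isOpen_Ioo hmid
    have haK : a ∈ K := hK.out hsK htK (Ioo_subset_Icc_self ha)
    exact ⟨_, _, Prod.Lex.toLex_le_toLex.2 (Or.inl ha.1), covBy_of_mem haK haA,
      Prod.Lex.toLex_le_toLex.2 (Or.inl ha.2)⟩
  · obtain ⟨rfl, rfl⟩ := Bool.lt_iff.1 hij
    exact ⟨_, _, le_rfl, covBy_of_mem hsK (htA rfl), le_rfl⟩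

end KA

theorem IA_totallyDisconnected_general (A : Set ℝ)
    (hdense : Set.Icc (0:ℝ) 1 ⊆ closure A) :
    TotallyDisconnectedSpace (KA (Set.Icc 0 1) A) :=
  have := totallySeparatedSpace_of_exists_covBy_between fun _ _ =>
    KA.exists_covBy_between ordConnected_Icc hdense
  inferInstance

theorem IA_totallyDisconnected (A : Set ℝ) (hA : A ⊆ Set.Ioo 0 1)
    (hdense : Set.Icc (0:ℝ) 1 ⊆ closure A) :
    TotallyDisconnectedSpace (KA (Set.Icc 0 1) A) :=
  IA_totallyDisconnected_general A hdense
end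

section
/- Let K be a compact Hausdorff space containing a nontrivial convergent sequence (a convergent injective sequence). Then the Banach space C(K) of continuous real-valued functions with the supremum norm is isomorphic (as a topological vector space / via a continuous linear equivalence) to any of its closed hyperplanes; in particular C(K) is isomorphic to the closed hyperplane {f ∈ C(K) : f(x₀) = 0} for any point x₀ ∈ K. -/
/-!
Passing to a subsequence, the points `y n` of the sequence get pairwise disjoint open
neighbourhoods carrying Urysohn bumps `u n` with `u n (y n) = 1`. For `c n → 0` the series
`∑ c n • u n` converges in `C(K)` and takes the value `c n` at `y n`, so `f` can be modified to
take any values `t n` at the points `y n` as long as `t n - f (y n) → 0`. Modifying `g` so that its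
value at `y n` becomes `g (y (n + 1))` gives a continuous linear bijection
`g ↦ (g (y 0), shifted g)` from `C(K)` onto `ℝ × C(K)`, an isomorphism by the open mapping
theorem. Finally all closed hyperplanes of a space are isomorphic, and `{0} × C(K)` is one of
`ℝ × C(K)`.
-/

open Filter Function Set Topology

namespace ContinuousLinearMap

section Series

variable {𝕜 E F : Type*} [NontriviallyNormedField 𝕜] [NormedAddCommGroup E] [NormedSpace 𝕜 E]
  [CompleteSpace E] [NormedAddCommGroup F] [NormedSpace 𝕜 F]

/-- Continuity of the sum comes from the Banach–Steinhaus theorem. -/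
noncomputable def tsumOfSummable (f : ℕ → E →L[𝕜] F) (hf : ∀ x, Summable fun n => f n x) :
    E →L[𝕜] F :=
  continuousLinearMapOfTendsto (fun N => ∑ n ∈ Finset.range N, f n) (f := fun x => ∑' n, f n x)
    (tendsto_pi_nhds.2 fun x => by simpa using (hf x).hasSum.tendsto_sum_nat)

end Series

section Hyperplane

variable {𝕜 E F : Type*} [Field 𝕜] [TopologicalSpace 𝕜] [AddCommGroup E] [TopologicalSpace E]
  [Module 𝕜 E] [AddCommGroup F] [TopologicalSpace F] [Module 𝕜 F] {φ ψ : E →L[𝕜] 𝕜}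

lemma exists_apply_ne_zero_and_apply_ne_zero (hφ : φ ≠ 0) (hψ : ψ ≠ 0) :
    ∃ z, φ z ≠ 0 ∧ ψ z ≠ 0 := by
  obtain ⟨a, ha⟩ := DFunLike.ne_iff.1 hφ
  obtain ⟨b, hb⟩ := DFunLike.ne_iff.1 hψ
  by_cases hψa : ψ a = 0
  · by_cases hφb : φ b = 0
    · exact ⟨a + b, by simpa [hφb] using ha, by simpa [hψa] using hb⟩
    · exact ⟨b, hφb, hb⟩
  · exact ⟨a, ha, hψa⟩

variable [IsTopologicalAddGroup E] [ContinuousSMul 𝕜 E] {z : E}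

def projKerAlong (ψ : E →L[𝕜] 𝕜) (z : E) : E →L[𝕜] E :=
  ContinuousLinearMap.id 𝕜 E - (ψ z)⁻¹ • ψ.smulRight z

lemma projKerAlong_apply (ψ : E →L[𝕜] 𝕜) (z h : E) :
    projKerAlong ψ z h = h - (ψ h / ψ z) • z := by
  simp [projKerAlong, smul_smul, div_eq_inv_mul]

lemma apply_projKerAlong (hψ : ψ z ≠ 0) (h : E) : ψ (projKerAlong ψ z h) = 0 := by
  simp [projKerAlong_apply, hψ]

lemma projKerAlong_eq_self {h : E} (hh : ψ h = 0) : projKerAlong ψ z h = h := by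
  simp [projKerAlong_apply, hh]

lemma projKerAlong_projKerAlong (hψ : ψ z ≠ 0) (h : E) :
    projKerAlong ψ z (projKerAlong φ z h) = projKerAlong ψ z h := by
  rw [projKerAlong_apply, projKerAlong_apply, projKerAlong_apply]
  simp only [map_sub, map_smul, smul_eq_mul]
  rw [sub_div, mul_div_assoc, div_self hψ, mul_one, sub_smul]
  abel

def kerEquivKer (hφ : φ z ≠ 0) (hψ : ψ z ≠ 0) : φ.ker ≃L[𝕜] ψ.ker :=
  .equivOfInverse
    ((projKerAlong ψ z ∘L φ.ker.subtypeL).codRestrict ψ.ker fun h => apply_projKerAlong hψ h)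
    ((projKerAlong φ z ∘L ψ.ker.subtypeL).codRestrict φ.ker fun h => apply_projKerAlong hφ h)
    (fun h => Subtype.ext <| (projKerAlong_projKerAlong hφ h).trans (projKerAlong_eq_self h.2))
    (fun h => Subtype.ext <| (projKerAlong_projKerAlong hψ h).trans (projKerAlong_eq_self h.2))

theorem nonempty_ker_equiv_ker (hφ : φ ≠ 0) (hψ : ψ ≠ 0) : Nonempty (φ.ker ≃L[𝕜] ψ.ker) :=
  let ⟨_, hφz, hψz⟩ := exists_apply_ne_zero_and_apply_ne_zero hφ hψ
  ⟨kerEquivKer hφz hψz⟩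

def kerFstCompEquiv (e : E ≃L[𝕜] 𝕜 × F) : (fst 𝕜 𝕜 F ∘L (e : E →L[𝕜] 𝕜 × F)).ker ≃L[𝕜] F :=
  .equivOfInverse
    (snd 𝕜 𝕜 F ∘L (e : E →L[𝕜] 𝕜 × F) ∘L (fst 𝕜 𝕜 F ∘L (e : E →L[𝕜] 𝕜 × F)).ker.subtypeL)
    (((e.symm : 𝕜 × F →L[𝕜] E) ∘L inr 𝕜 𝕜 F).codRestrict _ fun f => by simp)
    (fun h => Subtype.ext <| e.symm_apply_eq.2 <| Prod.ext (h.2.symm : 0 = (e h).1) rfl)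
    (fun f => congrArg Prod.snd (e.apply_symm_apply (0, f)))

theorem nonempty_equiv_ker_of_equiv_prod (e : E ≃L[𝕜] 𝕜 × E) (hφ : φ ≠ 0) :
    Nonempty (E ≃L[𝕜] φ.ker) := by
  have hfst : fst 𝕜 𝕜 E ∘L (e : E →L[𝕜] 𝕜 × E) ≠ 0 :=
    DFunLike.ne_iff.2 ⟨e.symm (1, 0), by simp⟩
  obtain ⟨e'⟩ := nonempty_ker_equiv_ker hfst hφ
  exact ⟨(kerFstCompEquiv e).symm.trans e'⟩

end Hyperplane

end ContinuousLinearMap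

section Bumps

variable {K : Type*} [TopologicalSpace K]

theorem exists_subseq_pairwise_disjoint_nhds [T2Space K] {x : ℕ → K} {p : K}
    (hx : Tendsto x atTop (𝓝 p)) (hne : ∀ n, x n ≠ p) :
    ∃ k : ℕ → ℕ, StrictMono k ∧ ∃ V : ℕ → Set K,
      (∀ n, IsOpen (V n)) ∧ (∀ n, x (k n) ∈ V n) ∧ Pairwise (Disjoint on V) := by
  choose U W hU hW hxU hpW hUW using fun n => t2_separation (hne n)
  choose next hnext using fun j => eventually_atTop.1
    ((hx.eventually ((hW j).mem_nhds (hpW j))).and (eventually_gt_atTop j))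
  set k : ℕ → ℕ := fun n => next^[n] 0
  have hk_succ (n : ℕ) : k (n + 1) = next (k n) := iterate_succ_apply' next n 0
  have hk : StrictMono k :=
    strictMono_nat_of_lt_succ fun n => hk_succ n ▸ (hnext (k n) _ le_rfl).2
  have hxW {i n : ℕ} (hin : i < n) : x (k n) ∈ W (k i) :=
    (hnext (k i) (k n) (hk_succ i ▸ hk.monotone hin)).1
  refine ⟨k, hk, fun n => U (k n) ∩ ⋂ i < n, W (k i), fun n => ?_, fun n => ?_,
    (pairwise_disjoint_on _).2 fun i n hin => ?_⟩
  · exact (hU _).inter ((finite_lt_nat n).isOpen_biInter fun i _ => hW _)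
  · exact ⟨hxU _, mem_iInter₂.2 fun i hi => hxW hi⟩
  · exact (hUW (k i)).mono inter_subset_left (inter_subset_right.trans (biInter_subset_of_mem hin))

theorem exists_pairwise_disjoint_bumps [CompactSpace K] [T2Space K] {x : ℕ → K} {p : K}
    (hx : Tendsto x atTop (𝓝 p)) (hne : ∀ n, x n ≠ p) :
    ∃ (y : ℕ → K) (u : ℕ → C(K, ℝ)), Tendsto y atTop (𝓝 p) ∧
      Pairwise (Disjoint on fun n => support (u n)) ∧ (∀ n, ‖u n‖ ≤ 1) ∧ ∀ n, u n (y n) = 1 := by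
  obtain ⟨k, hk, V, hVo, hxV, hV⟩ := exists_subseq_pairwise_disjoint_nhds hx hne
  choose u hu0 hu1 hu01 using fun n => exists_continuous_zero_one_of_isClosed
    (hVo n).isClosed_compl isClosed_singleton (disjoint_singleton_right.2 (not_not.2 (hxV n)))
  have hsupp (n : ℕ) : support (u n) ⊆ V n := fun z hz => by_contra fun hzV => hz (hu0 n hzV)
  refine ⟨x ∘ k, u, hx.comp hk.tendsto_atTop, hV.mono fun i j h => h.mono (hsupp i) (hsupp j),
    fun n => (ContinuousMap.norm_le _ zero_le_one).2 fun z => ?_, fun n => hu1 n rfl⟩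
  rw [Real.norm_eq_abs, abs_le]
  exact ⟨by linarith [(hu01 n z).1], (hu01 n z).2⟩

variable {u : ℕ → C(K, ℝ)} {y : ℕ → K}

lemma apply_eq_zero_of_apply_ne_zero (hdisj : Pairwise (Disjoint on fun n => support (u n)))
    {m n : ℕ} {z : K} (hz : u m z ≠ 0) (hnm : n ≠ m) : u n z = 0 :=
  not_not.1 fun h => (hdisj hnm).le_bot ⟨h, hz⟩

lemma norm_sum_smul_le [CompactSpace K] (hdisj : Pairwise (Disjoint on fun n => support (u n)))
    (hnorm : ∀ n, ‖u n‖ ≤ 1) (s : Finset ℕ) {c : ℕ → ℝ} {ε : ℝ} (hε : 0 ≤ ε)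
    (hc : ∀ n ∈ s, |c n| ≤ ε) : ‖∑ n ∈ s, c n • u n‖ ≤ ε := by
  refine (ContinuousMap.norm_le _ hε).2 fun z => ?_
  simp only [ContinuousMap.sum_apply, ContinuousMap.smul_apply, smul_eq_mul, Real.norm_eq_abs]
  by_cases hz : ∃ m ∈ s, u m z ≠ 0
  · obtain ⟨m, hm, hmz⟩ := hz
    rw [Finset.sum_eq_single_of_mem m hm fun n _ hnm => by
      rw [apply_eq_zero_of_apply_ne_zero hdisj hmz hnm, mul_zero], abs_mul]
    have hum : |u m z| ≤ 1 := ((u m).norm_coe_le_norm z).trans (hnorm m)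
    calc |c m| * |u m z| ≤ ε * 1 := mul_le_mul (hc m hm) hum (abs_nonneg _) hε
      _ = ε := mul_one ε
  · push Not at hz
    rw [Finset.sum_eq_zero fun n hn => by rw [hz n hn, mul_zero], abs_zero]
    exact hε

lemma summable_smul_of_tendsto_zero [CompactSpace K]
    (hdisj : Pairwise (Disjoint on fun n => support (u n))) (hnorm : ∀ n, ‖u n‖ ≤ 1)
    {c : ℕ → ℝ} (hc : Tendsto c atTop (𝓝 0)) : Summable fun n => c n • u n := by
  refine summable_iff_vanishing_norm.2 fun ε hε => ?_
  obtain ⟨N, hN⟩ := Metric.tendsto_atTop.1 hc (ε / 2) (half_pos hε)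
  refine ⟨Finset.range N, fun t ht =>
    (norm_sum_smul_le hdisj hnorm t (half_pos hε).le fun n hn => ?_).trans_lt (half_lt_self hε)⟩
  have hNn : N ≤ n := not_lt.1 fun h => Finset.disjoint_left.1 ht hn (Finset.mem_range.2 h)
  simpa [Real.dist_eq] using (hN n hNn).le

lemma tsum_smul_apply_of_apply_eq_one [CompactSpace K]
    (hdisj : Pairwise (Disjoint on fun n => support (u n))) (hnorm : ∀ n, ‖u n‖ ≤ 1)
    {c : ℕ → ℝ} (hc : Tendsto c atTop (𝓝 0)) {m : ℕ} {z : K} (hz : u m z = 1) :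
    (∑' n, c n • u n) z = c m := by
  have h := (ContinuousMap.evalCLM ℝ z).map_tsum (summable_smul_of_tendsto_zero hdisj hnorm hc)
  simp only [ContinuousMap.evalCLM_apply, ContinuousMap.smul_apply, smul_eq_mul] at h
  rw [h, tsum_eq_single m fun n hnm => by
    rw [apply_eq_zero_of_apply_ne_zero hdisj (hz ▸ one_ne_zero) hnm, mul_zero], hz, mul_one]

/-- The modification of `f` that takes the value `t n` at `y n`, provided `t n - f (y n) → 0`. -/
noncomputable def prescribeValues (u : ℕ → C(K, ℝ)) (y : ℕ → K) (f : C(K, ℝ)) (t : ℕ → ℝ) :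
    C(K, ℝ) :=
  f + ∑' n, (t n - f (y n)) • u n

lemma prescribeValues_self (f : C(K, ℝ)) : prescribeValues u y f (fun n => f (y n)) = f := by
  simp [prescribeValues]

lemma tendsto_apply_succ_sub_apply {p : K} (hy : Tendsto y atTop (𝓝 p)) (g : C(K, ℝ)) :
    Tendsto (fun n => g (y (n + 1)) - g (y n)) atTop (𝓝 0) := by
  have hg := (g.continuous.tendsto p).comp hy
  simpa using (hg.comp (tendsto_add_atTop_nat 1)).sub hg

variable [CompactSpace K]

lemma prescribeValues_apply (hdisj : Pairwise (Disjoint on fun n => support (u n)))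
    (hnorm : ∀ n, ‖u n‖ ≤ 1) (hpeak : ∀ n, u n (y n) = 1) {f : C(K, ℝ)} {t : ℕ → ℝ}
    (ht : Tendsto (fun n => t n - f (y n)) atTop (𝓝 0)) (m : ℕ) :
    prescribeValues u y f t (y m) = t m := by
  rw [prescribeValues, ContinuousMap.add_apply,
    tsum_smul_apply_of_apply_eq_one hdisj hnorm ht (hpeak m), add_sub_cancel]

lemma prescribeValues_prescribeValues (hdisj : Pairwise (Disjoint on fun n => support (u n)))
    (hnorm : ∀ n, ‖u n‖ ≤ 1) (hpeak : ∀ n, u n (y n) = 1) {f : C(K, ℝ)} {t s : ℕ → ℝ}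
    (ht : Tendsto (fun n => t n - f (y n)) atTop (𝓝 0))
    (hs : Tendsto (fun n => s n - f (y n)) atTop (𝓝 0)) :
    prescribeValues u y (prescribeValues u y f t) s = prescribeValues u y f s := by
  have hst : Tendsto (fun n => s n - t n) atTop (𝓝 0) := by simpa using hs.sub ht
  rw [prescribeValues]
  simp only [prescribeValues_apply hdisj hnorm hpeak ht]
  rw [prescribeValues, prescribeValues, add_assoc,
    ← (summable_smul_of_tendsto_zero hdisj hnorm ht).tsum_add
      (summable_smul_of_tendsto_zero hdisj hnorm hst)]
  simp only [← add_smul, sub_add_sub_cancel']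

noncomputable def shiftValues (hdisj : Pairwise (Disjoint on fun n => support (u n)))
    (hnorm : ∀ n, ‖u n‖ ≤ 1) {p : K} (hy : Tendsto y atTop (𝓝 p)) : C(K, ℝ) →L[ℝ] C(K, ℝ) :=
  .id ℝ _ + .tsumOfSummable
    (fun n => .smulRight (ContinuousMap.evalCLM ℝ (y (n + 1)) - ContinuousMap.evalCLM ℝ (y n) :
      C(K, ℝ) →L[ℝ] ℝ) (u n))
    fun g => summable_smul_of_tendsto_zero hdisj hnorm (tendsto_apply_succ_sub_apply hy g)

lemma shiftValues_apply (hdisj : Pairwise (Disjoint on fun n => support (u n)))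
    (hnorm : ∀ n, ‖u n‖ ≤ 1) {p : K} (hy : Tendsto y atTop (𝓝 p)) (g : C(K, ℝ)) :
    shiftValues hdisj hnorm hy g = prescribeValues u y g fun n => g (y (n + 1)) :=
  rfl

theorem nonempty_equiv_prod_of_bumps (hdisj : Pairwise (Disjoint on fun n => support (u n)))
    (hnorm : ∀ n, ‖u n‖ ≤ 1) (hpeak : ∀ n, u n (y n) = 1) {p : K} (hy : Tendsto y atTop (𝓝 p)) :
    Nonempty (C(K, ℝ) ≃L[ℝ] ℝ × C(K, ℝ)) := by
  set S := shiftValues hdisj hnorm hy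
  have hdiff := tendsto_apply_succ_sub_apply hy
  have hconst (f : C(K, ℝ)) : Tendsto (fun n => f (y n) - f (y n)) atTop (𝓝 0) := by simp
  let B : C(K, ℝ) →L[ℝ] ℝ × C(K, ℝ) := (ContinuousMap.evalCLM ℝ (y 0)).prod S
  let A (q : ℝ × C(K, ℝ)) : C(K, ℝ) :=
    prescribeValues u y q.2 fun | 0 => q.1 | n + 1 => q.2 (y n)
  have hA (q : ℝ × C(K, ℝ)) : Tendsto
      (fun n => (match n with | 0 => q.1 | n + 1 => q.2 (y n)) - q.2 (y n)) atTop (𝓝 0) :=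
    (tendsto_add_atTop_iff_nat 1).1 (by simpa using (hdiff q.2).neg)
  have hleft : LeftInverse A B := fun g => by
    have hBg : (fun n => match n with | 0 => g (y 0) | n + 1 => S g (y n)) = fun n => g (y n) :=
      funext fun
        | 0 => rfl
        | n + 1 => prescribeValues_apply hdisj hnorm hpeak (hdiff g) n
    change prescribeValues u y (S g) (fun n => match n with | 0 => g (y 0) | n + 1 => S g (y n)) = g
    rw [hBg, shiftValues_apply,
      prescribeValues_prescribeValues hdisj hnorm hpeak (hdiff g) (hconst g), prescribeValues_self]
  have hright : RightInverse A B := fun q => by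
    have hAq : (fun n => A q (y (n + 1))) = fun n => q.2 (y n) :=
      funext fun n => prescribeValues_apply hdisj hnorm hpeak (hA q) (n + 1)
    refine Prod.ext (prescribeValues_apply hdisj hnorm hpeak (hA q) 0) ?_
    change S (A q) = q.2
    rw [shiftValues_apply, hAq,
      prescribeValues_prescribeValues hdisj hnorm hpeak (hA q) (hconst q.2), prescribeValues_self]
  exact ⟨.ofBijective B (LinearMap.ker_eq_bot.2 hleft.injective)
    (LinearMap.range_eq_top.2 hright.surjective)⟩

end Bumps

theorem CK_iso_hyperplanes_of_convergent_sequence_general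
    (K : Type*) [TopologicalSpace K] [CompactSpace K] [T2Space K]
    (x : ℕ → K) (p : K)
    (hconv : Filter.Tendsto x Filter.atTop (nhds p)) (hne : ∀ n, x n ≠ p) :
    (∀ φ : C(K, ℝ) →L[ℝ] ℝ, φ ≠ 0 →
      Nonempty (C(K, ℝ) ≃L[ℝ] LinearMap.ker (φ : C(K, ℝ) →ₗ[ℝ] ℝ))) ∧
    (∀ x₀ : K,
      Nonempty (C(K, ℝ) ≃L[ℝ] LinearMap.ker ((ContinuousMap.evalCLM ℝ x₀ : C(K, ℝ) →L[ℝ] ℝ) : C(K, ℝ) →ₗ[ℝ] ℝ))) := by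
  obtain ⟨y, u, hy, hdisj, hnorm, hpeak⟩ := exists_pairwise_disjoint_bumps hconv hne
  obtain ⟨e⟩ := nonempty_equiv_prod_of_bumps hdisj hnorm hpeak hy
  have hyperplane (φ : C(K, ℝ) →L[ℝ] ℝ) (hφ : φ ≠ 0) :
      Nonempty (C(K, ℝ) ≃L[ℝ] LinearMap.ker (φ : C(K, ℝ) →ₗ[ℝ] ℝ)) :=
    ContinuousLinearMap.nonempty_equiv_ker_of_equiv_prod e hφ
  exact ⟨hyperplane, fun x₀ => hyperplane _ (DFunLike.ne_iff.2 ⟨1, by simp⟩)⟩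

theorem CK_iso_hyperplanes_of_convergent_sequence
    (K : Type*) [TopologicalSpace K] [CompactSpace K] [T2Space K]
    (x : ℕ → K) (p : K) (hinj : Function.Injective x)
    (hconv : Filter.Tendsto x Filter.atTop (nhds p)) (hne : ∀ n, x n ≠ p) :
    (∀ φ : C(K, ℝ) →L[ℝ] ℝ, φ ≠ 0 →
      Nonempty (C(K, ℝ) ≃L[ℝ] LinearMap.ker (φ : C(K, ℝ) →ₗ[ℝ] ℝ))) ∧
    (∀ x₀ : K,
      Nonempty (C(K, ℝ) ≃L[ℝ] LinearMap.ker ((ContinuousMap.evalCLM ℝ x₀ : C(K, ℝ) →L[ℝ] ℝ) : C(K, ℝ) →ₗ[ℝ] ℝ))) :=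
  CK_iso_hyperplanes_of_convergent_sequence_general K x p hconv hne
end

section
/- Let L be a nonempty linearly ordered compact connected separable metrizable space with more than one point. Then L is order isomorphic to the unit interval [0,1] (with its usual order). -/
/-! Connectedness makes the order dense, compactness gives every subset a least upper bound, and
separability gives a countable order-dense subset avoiding the endpoints. By Cantor's
back-and-forth theorem two such subsets, one of `L` and one of `[0,1]`, are order isomorphic, and
the isomorphism extends to the ambient orders by sending `x` to the supremum of the images of the
points below `x`. -/

open Set TopologicalSpace

def OrderDense {α : Type*} [LinearOrder α] (s : Set α) : Prop :=
  ∀ ⦃x y : α⦄, x < y → ∃ u ∈ s, x < u ∧ u < y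

namespace OrderDense

variable {α β : Type*} [LinearOrder α] [LinearOrder β] {s : Set α} {t : Set β}

theorem nonempty [Nontrivial α] (hs : OrderDense s) : s.Nonempty :=
  let ⟨_, _, hxy⟩ := exists_pair_lt α
  let ⟨u, hu, _⟩ := hs hxy
  ⟨u, hu⟩

theorem denselyOrdered (hs : OrderDense s) : DenselyOrdered s where
  dense _ _ huv :=
    let ⟨w, hw, huw, hwv⟩ := hs huv
    ⟨⟨w, hw⟩, huw, hwv⟩

theorem noMinOrder (hs : OrderDense s) (hbot : ∀ x, IsBot x → x ∉ s) : NoMinOrder s where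
  exists_lt u := by
    obtain ⟨x, hxu⟩ : ∃ x, x < (u : α) := by simpa [IsBot] using mt (hbot u) (not_not.2 u.2)
    obtain ⟨w, hw, -, hwu⟩ := hs hxu
    exact ⟨⟨w, hw⟩, hwu⟩

theorem noMaxOrder (hs : OrderDense s) (htop : ∀ x, IsTop x → x ∉ s) : NoMaxOrder s where
  exists_gt u := by
    obtain ⟨x, hux⟩ : ∃ x, (u : α) < x := by simpa [IsTop] using mt (htop u) (not_not.2 u.2)
    obtain ⟨w, hw, huw, -⟩ := hs hux
    exact ⟨⟨w, hw⟩, huw⟩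

theorem nonempty_orderIso_of_countable [Nontrivial α] [Nontrivial β]
    (hs : OrderDense s) (hsc : s.Countable) (hsbot : ∀ x, IsBot x → x ∉ s)
    (hstop : ∀ x, IsTop x → x ∉ s)
    (ht : OrderDense t) (htc : t.Countable) (htbot : ∀ y, IsBot y → y ∉ t)
    (httop : ∀ y, IsTop y → y ∉ t) : Nonempty (s ≃o t) :=
  have := hsc.to_subtype; have := hs.denselyOrdered; have := hs.noMinOrder hsbot
  have := hs.noMaxOrder hstop; have := hs.nonempty.to_subtype
  have := htc.to_subtype; have := ht.denselyOrdered; have := ht.noMinOrder htbot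
  have := ht.noMaxOrder httop; have := ht.nonempty.to_subtype
  Order.iso_of_countable_dense s t

theorem strictMono_of_isLUB (hs : OrderDense s) {f : s → β} (hf : StrictMono f) {g : α → β}
    (hg : ∀ x, IsLUB (f '' {u | (u : α) < x}) (g x)) : StrictMono g := by
  intro x y hxy
  obtain ⟨u, hu, hxu, huy⟩ := hs hxy
  obtain ⟨v, hv, huv, hvy⟩ := hs huy
  calc g x ≤ f ⟨u, hu⟩ := (hg x).2 <| by
        rintro _ ⟨w, hw, rfl⟩
        exact (hf (hw.trans hxu)).le
    _ < f ⟨v, hv⟩ := hf huv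
    _ ≤ g y := (hg y).1 ⟨⟨v, hv⟩, hvy, rfl⟩

theorem surjective_of_isLUB (ht : OrderDense t) (hα : ∀ S : Set α, ∃ x, IsLUB S x)
    (e : s ≃o t) {g : α → β} (hg : ∀ x, IsLUB ((fun u => (e u : β)) '' {u | (u : α) < x}) (g x)) :
    Function.Surjective g := by
  intro c
  obtain ⟨x, hx⟩ := hα ((↑) '' {u : s | (e u : β) < c})
  refine ⟨x, le_antisymm ((hg x).2 ?_) (not_lt.1 fun hxc => ?_)⟩
  · rintro _ ⟨u, hux, rfl⟩
    refine not_lt.1 fun hcu => not_le.2 hux (hx.2 ?_)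
    rintro _ ⟨v, hv, rfl⟩
    exact (e.lt_iff_lt.1 (Subtype.coe_lt_coe.1 (hv.trans hcu))).le
  · obtain ⟨w, hw, hxw, hwc⟩ := ht hxc
    obtain ⟨w', hw', hww', hw'c⟩ := ht hwc
    have hw'x : (e.symm ⟨w', hw'⟩ : α) ≤ x := hx.1 ⟨_, by simpa using hw'c, rfl⟩
    have hwx : (e.symm ⟨w, hw⟩ : α) < x :=
      lt_of_lt_of_le (e.symm.lt_iff_lt.2 (Subtype.mk_lt_mk.2 hww')) hw'x
    exact not_le.2 hxw ((hg x).1 ⟨_, hwx, by simp⟩)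

theorem nonempty_orderIso_of_orderIso (hs : OrderDense s) (ht : OrderDense t)
    (hα : ∀ S : Set α, ∃ x, IsLUB S x) (hβ : ∀ S : Set β, ∃ y, IsLUB S y) (e : s ≃o t) :
    Nonempty (α ≃o β) := by
  choose g hg using fun x : α => hβ ((fun u => (e u : β)) '' {u | (u : α) < x})
  have hf : StrictMono fun u => (e u : β) := fun _ _ h => e.lt_iff_lt.2 h
  exact ⟨StrictMono.orderIsoOfSurjective g (hs.strictMono_of_isLUB hf hg)
    (ht.surjective_of_isLUB hα e hg)⟩

end OrderDense

section Topology

variable {α : Type*} [LinearOrder α] [TopologicalSpace α]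

theorem isClosed_upperBounds [ClosedIciTopology α] (S : Set α) : IsClosed (upperBounds S) := by
  rw [show upperBounds S = ⋂ x ∈ S, Ici x by ext; simp [upperBounds]]
  exact isClosed_biInter fun _ _ => isClosed_Ici

theorem exists_isLUB_of_compactSpace [OrderClosedTopology α] [CompactSpace α] [Nonempty α]
    (S : Set α) : ∃ x, IsLUB S x := by
  obtain ⟨b, -, hb⟩ := isCompact_univ.exists_isGreatest (univ_nonempty (α := α))
  exact (isClosed_upperBounds S).isCompact.exists_isLeast ⟨b, fun x _ => hb (mem_univ x)⟩

theorem exists_countable_orderDense_no_bot_top [OrderTopology α] [PreconnectedSpace α]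
    [SeparableSpace α] [Nontrivial α] :
    ∃ s : Set α, s.Countable ∧ OrderDense s ∧ (∀ x, IsBot x → x ∉ s) ∧ ∀ x, IsTop x → x ∉ s := by
  have := denselyOrdered_of_preconnectedSpace (α := α)
  obtain ⟨s, hsc, hsd, hbot, htop⟩ := exists_countable_dense_no_bot_top α
  exact ⟨s, hsc, fun _ _ h => (hsd.exists_between h).imp fun _ ⟨hu, hxu, huy⟩ => ⟨hu, hxu, huy⟩,
    hbot, htop⟩

end Topology

theorem nonempty_orderIso_of_compact_connected_separable (α β : Type*)
    [LinearOrder α] [TopologicalSpace α] [OrderTopology α] [CompactSpace α] [ConnectedSpace α]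
    [SeparableSpace α] [Nontrivial α]
    [LinearOrder β] [TopologicalSpace β] [OrderTopology β] [CompactSpace β] [ConnectedSpace β]
    [SeparableSpace β] [Nontrivial β] : Nonempty (α ≃o β) := by
  obtain ⟨s, hsc, hs, hsbot, hstop⟩ := exists_countable_orderDense_no_bot_top (α := α)
  obtain ⟨t, htc, ht, htbot, httop⟩ := exists_countable_orderDense_no_bot_top (α := β)
  obtain ⟨e⟩ := hs.nonempty_orderIso_of_countable hsc hsbot hstop ht htc htbot httop
  exact hs.nonempty_orderIso_of_orderIso ht exists_isLUB_of_compactSpace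
    exists_isLUB_of_compactSpace e

theorem compact_connected_separable_line_orderIso_unitInterval_general
    (L : Type*) [LinearOrder L] [TopologicalSpace L] [OrderTopology L]
    [CompactSpace L] [ConnectedSpace L] [TopologicalSpace.SeparableSpace L]
    [Nontrivial L] :
    Nonempty (L ≃o Set.Icc (0:ℝ) 1) :=
  nonempty_orderIso_of_compact_connected_separable L unitInterval

theorem compact_connected_separable_line_orderIso_unitInterval
    (L : Type*) [LinearOrder L] [TopologicalSpace L] [OrderTopology L]
    [CompactSpace L] [ConnectedSpace L] [TopologicalSpace.SeparableSpace L]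
    [TopologicalSpace.MetrizableSpace L] [Nontrivial L] :
    Nonempty (L ≃o Set.Icc (0:ℝ) 1) :=
  compact_connected_separable_line_orderIso_unitInterval_general L
end
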